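/- Let K = diag(λ_1, …, λ_m) with pairwise distinct λ_i, and A = [[0, I_m], [-K, 0]]. Let ℰ(ij) = [[0,0],[E(ij),0]]. Then the span of the matrices ℰ(ij), [ℰ(ij), A], [[ℰ(ij), A], A], and [[[ℰ(ij), A], A], A] over all 1 ≤ i ≤ j ≤ m equals the full Lie algebra sp(m) = {Y ∈ M_{2m}(ℝ) : JY symmetric}, which has dimension m(2m+1). -/

import Mathlib

open Matrix

/-- The standard symplectic form matrix `J = [[0, I_m], [-I_m, 0]]`. -/
def Jmat (m : ℕ) : Matrix (Fin m ⊕ Fin m) (Fin m ⊕ Fin m) ℝ :=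
  Matrix.fromBlocks 0 1 (-1) 0

/-- The symmetric matrices `E(ij)` with entries `δ_{ik}δ_{jl} + δ_{il}δ_{jk}`. -/
def Eij (m : ℕ) (i j : Fin m) : Matrix (Fin m) (Fin m) ℝ :=
  Matrix.of fun k l =>
    ((if i = k then 1 else 0) * (if j = l then 1 else 0) +
      (if i = l then 1 else 0) * (if j = k then 1 else 0) : ℝ)

/-!
The symplectic Lie algebra consists of the block matrices `[[a, b], [c, -aᵀ]]` with `b`, `c`
symmetric, and `Y ↦ J Y` identifies it with the symmetric `2m × 2m` matrices, so its dimension is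
`(2m+1).choose 2 = m(2m+1)`.

Bracketing with `A = [[0, 1], [-K, 0]]` sends a lower block `c` to the diagonal block `-c`, a
symmetric diagonal block `a` to the upper block `2a` plus the lower block `aK + Ka`, and an upper
block `b` to the diagonal block `-bK`. Starting from the lower block `E = E(ij)`, the three brackets
are therefore the diagonal blocks `-E` and `3EK + KE` and, modulo lower symmetric blocks, the upper
block `-2E`. For `K = diag(λ)` one has `(3λᵢ + λⱼ) E(ij) - (3 E(ij) K + K E(ij)) = 2(λᵢ - λⱼ) eᵢⱼ`,
so distinct eigenvalues produce every diagonal block.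
-/

open Module

section SymmetricMatrices

variable (n R : Type*) [Fintype n] [CommRing R]

def symmetricMatrices : Submodule R (Matrix n n R) where
  carrier := {S | S.IsSymm}
  add_mem' := IsSymm.add
  zero_mem' := isSymm_zero
  smul_mem' r _ h := h.smul r

omit [Fintype n] in
variable {n R} in
@[simp] theorem mem_symmetricMatrices {S : Matrix n n R} :
    S ∈ symmetricMatrices n R ↔ S.IsSymm :=
  Iff.rfl

def symmetricMatricesEquivSym2 : symmetricMatrices n R ≃ₗ[R] (Sym2 n → R) where
  toFun S := Sym2.lift ⟨fun i j => S.1 i j, fun i j => (S.2.apply i j).symm⟩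
  invFun f := ⟨of fun i j => f s(i, j), IsSymm.ext fun i j => by simp [Sym2.eq_swap]⟩
  map_add' S T := by ext ⟨i, j⟩; simp
  map_smul' r S := by ext ⟨i, j⟩; simp
  left_inv S := by ext i j; simp
  right_inv f := by ext ⟨i, j⟩; simp

theorem finrank_symmetricMatrices [StrongRankCondition R] :
    finrank R (symmetricMatrices n R) = (Fintype.card n + 1).choose 2 := by
  rw [(symmetricMatricesEquivSym2 n R).finrank_eq, finrank_fintype_fun_eq_card, Sym2.card]

end SymmetricMatrices

theorem Matrix.single_one_mul_diagonal {n R : Type*} [Fintype n] [DecidableEq n] [CommRing R]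
    (d : n → R) (i j : n) : single i j (1 : R) * diagonal d = d j • single i j 1 := by
  ext k l; by_cases h : j = l <;> simp [single_apply, h]

theorem Matrix.diagonal_mul_single_one {n R : Type*} [Fintype n] [DecidableEq n] [CommRing R]
    (d : n → R) (i j : n) : diagonal d * single i j (1 : R) = d i • single i j 1 := by
  ext k l; by_cases h : i = k <;> simp [single_apply, h]

theorem Matrix.IsSymm.mul_add_mul_self {n R : Type*} [Fintype n] [CommRing R]
    {a K : Matrix n n R} (ha : a.IsSymm) (hK : K.IsSymm) : (a * K + K * a).IsSymm := by
  rw [IsSymm, transpose_add, transpose_mul, transpose_mul, ha.eq, hK.eq, add_comm]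

section SymplecticLieAlgebra

variable {l R : Type*} [Fintype l] [DecidableEq l] [CommRing R]

theorem mem_skewAdjoint_J_iff {Y : Matrix (l ⊕ l) (l ⊕ l) R} :
    Y ∈ skewAdjointMatricesSubmodule (J l R) ↔ (J l R * Y).IsSymm := by
  rw [mem_skewAdjointMatricesSubmodule, Matrix.IsSkewAdjoint, Matrix.IsAdjointPair, IsSymm,
    transpose_mul, J_transpose, mul_neg, mul_neg, neg_eq_iff_eq_neg]

theorem fromBlocks_mem_skewAdjoint_J_iff {a b c d : Matrix l l R} :
    fromBlocks a b c d ∈ skewAdjointMatricesSubmodule (J l R) ↔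
      d = -aᵀ ∧ b.IsSymm ∧ c.IsSymm := by
  rw [mem_skewAdjoint_J_iff, J, fromBlocks_multiply, IsSymm, fromBlocks_transpose,
    fromBlocks_inj]
  simp only [transpose_neg, zero_mul, one_mul, neg_mul, add_zero, zero_add, neg_inj]
  constructor
  · rintro ⟨hc, had, -, hb⟩
    exact ⟨by rw [had, neg_neg], hb, hc⟩
  · rintro ⟨rfl, hb, hc⟩
    exact ⟨hc, by rw [neg_neg], by rw [transpose_neg, transpose_transpose, neg_neg], hb⟩

theorem finrank_skewAdjoint_J [StrongRankCondition R] :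
    finrank R (skewAdjointMatricesSubmodule (J l R)) = (2 * Fintype.card l + 1).choose 2 := by
  have hinj : Function.Injective (LinearMap.mulLeft R (J l R)) := fun Y Z h => by
    simpa [← mul_assoc, J_squared] using congrArg (J l R * ·) h
  have hmap : (skewAdjointMatricesSubmodule (J l R)).map (LinearMap.mulLeft R (J l R)) =
      symmetricMatrices (l ⊕ l) R := by
    ext Z
    simp only [Submodule.mem_map, mem_skewAdjoint_J_iff, LinearMap.mulLeft_apply,
      mem_symmetricMatrices]
    refine ⟨fun ⟨Y, hY, hYZ⟩ => hYZ ▸ hY, fun hZ => ⟨-(J l R * Z), ?_, ?_⟩⟩ <;>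
      simp [← mul_assoc, J_squared, hZ]
  rw [(Submodule.equivMapOfInjective _ hinj _).finrank_eq, hmap, finrank_symmetricMatrices,
    Fintype.card_sum, two_mul]

theorem Jmat_eq_neg_J (m : ℕ) : Jmat m = -J (Fin m) ℝ := by
  simp [Jmat, J, fromBlocks_neg]

theorem mem_skewAdjoint_J_iff_Jmat {m : ℕ} {Y : Matrix (Fin m ⊕ Fin m) (Fin m ⊕ Fin m) ℝ} :
    Y ∈ skewAdjointMatricesSubmodule (J (Fin m) ℝ) ↔ (Jmat m * Y)ᵀ = Jmat m * Y := by
  rw [mem_skewAdjoint_J_iff, Jmat_eq_neg_J, neg_mul, transpose_neg, neg_inj, IsSymm]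

end SymplecticLieAlgebra

theorem Matrix.fromBlocks_sub {l m n o α : Type*} [AddGroup α] (A A' : Matrix n l α)
    (B B' : Matrix n m α) (C C' : Matrix o l α) (D D' : Matrix o m α) :
    fromBlocks A B C D - fromBlocks A' B' C' D' =
      fromBlocks (A - A') (B - B') (C - C') (D - D') := by
  simp only [sub_eq_add_neg, fromBlocks_neg, fromBlocks_add]

section Blocks

variable {n R : Type*} [Fintype n] [DecidableEq n] [CommRing R]

@[simps]
def fromBlocksSkewₗ : Matrix n n R →ₗ[R] Matrix (n ⊕ n) (n ⊕ n) R where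
  toFun a := fromBlocks a 0 0 (-aᵀ)
  map_add' a b := by simp [fromBlocks_add, add_comm]
  map_smul' r a := by simp [fromBlocks_smul]

@[simps]
def fromBlocks₁₂ₗ : Matrix n n R →ₗ[R] Matrix (n ⊕ n) (n ⊕ n) R where
  toFun b := fromBlocks 0 b 0 0
  map_add' a b := by simp [fromBlocks_add]
  map_smul' r a := by simp [fromBlocks_smul]

@[simps]
def fromBlocks₂₁ₗ : Matrix n n R →ₗ[R] Matrix (n ⊕ n) (n ⊕ n) R where
  toFun c := fromBlocks 0 0 c 0
  map_add' a b := by simp [fromBlocks_add]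
  map_smul' r a := by simp [fromBlocks_smul]

theorem range_le_of_single_mem {N : Type*} [AddCommMonoid N] [Module R N]
    {L : Matrix n n R →ₗ[R] N} {W : Submodule R N} (h : ∀ i j, L (single i j 1) ∈ W) :
    LinearMap.range L ≤ W := by
  rw [LinearMap.range_eq_map, ← (stdBasis R n n).span_eq, Submodule.map_span_le]
  rintro _ ⟨⟨i, j⟩, rfl⟩
  rw [stdBasis_eq_single]
  exact h i j

theorem skewAdjoint_J_le_sup :
    skewAdjointMatricesSubmodule (J n R) ≤
      LinearMap.range fromBlocksSkewₗ ⊔ (symmetricMatrices n R).map fromBlocks₁₂ₗ ⊔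
        (symmetricMatrices n R).map fromBlocks₂₁ₗ := by
  intro Y hY
  rw [← fromBlocks_toBlocks Y] at hY ⊢
  obtain ⟨hd, hb, hc⟩ := fromBlocks_mem_skewAdjoint_J_iff.1 hY
  have hsum : fromBlocks Y.toBlocks₁₁ Y.toBlocks₁₂ Y.toBlocks₂₁ Y.toBlocks₂₂ =
      fromBlocksSkewₗ Y.toBlocks₁₁ + fromBlocks₁₂ₗ Y.toBlocks₁₂ + fromBlocks₂₁ₗ Y.toBlocks₂₁ := by
    simp [fromBlocks_add, hd]
  rw [hsum]
  exact Submodule.add_mem_sup (Submodule.add_mem_sup (LinearMap.mem_range_self _ _)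
    (Submodule.mem_map_of_mem hb)) (Submodule.mem_map_of_mem hc)

def companion (K : Matrix n n R) : Matrix (n ⊕ n) (n ⊕ n) R := fromBlocks 0 1 (-K) 0

def bracketCompanion (K : Matrix n n R) :
    Matrix (n ⊕ n) (n ⊕ n) R →ₗ[R] Matrix (n ⊕ n) (n ⊕ n) R :=
  LinearMap.mulRight R (companion K) - LinearMap.mulLeft R (companion K)

variable {K : Matrix n n R}

theorem bracketCompanion_fromBlocks₂₁ₗ {c : Matrix n n R} (hc : c.IsSymm) :
    bracketCompanion K (fromBlocks₂₁ₗ c) = fromBlocksSkewₗ (-c) := by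
  simp [bracketCompanion, companion, fromBlocks_multiply, fromBlocks_sub, hc.eq]

theorem bracketCompanion_fromBlocksSkewₗ {a : Matrix n n R} (ha : a.IsSymm) :
    bracketCompanion K (fromBlocksSkewₗ a) =
      fromBlocks₁₂ₗ ((2 : R) • a) + fromBlocks₂₁ₗ (a * K + K * a) := by
  simp [bracketCompanion, companion, fromBlocks_multiply, fromBlocks_add, fromBlocks_sub, ha.eq,
    two_smul]

theorem bracketCompanion_fromBlocks₁₂ₗ (hK : K.IsSymm) {b : Matrix n n R} (hb : b.IsSymm) :
    bracketCompanion K (fromBlocks₁₂ₗ b) = fromBlocksSkewₗ (-(b * K)) := by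
  simp [bracketCompanion, companion, fromBlocks_multiply, fromBlocks_sub, transpose_mul, hb.eq,
    hK.eq]

theorem bracketCompanion_mem_skewAdjoint_J (hK : K.IsSymm)
    {X : Matrix (n ⊕ n) (n ⊕ n) R} (hX : X ∈ skewAdjointMatricesSubmodule (J n R)) :
    bracketCompanion K X ∈ skewAdjointMatricesSubmodule (J n R) :=
  (J n R).isSkewAdjoint_bracket hX
    (fromBlocks_mem_skewAdjoint_J_iff.2 ⟨by simp, isSymm_one, hK.neg⟩)

end Blocks

section Eij

variable {m : ℕ}

theorem Eij_eq_single_add_single (i j : Fin m) : Eij m i j = single i j 1 + single j i 1 := by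
  ext k l
  simp only [Eij, of_apply, Matrix.add_apply, single_apply, ite_and]
  split_ifs <;> simp_all

theorem Eij_comm (i j : Fin m) : Eij m i j = Eij m j i := by
  rw [Eij_eq_single_add_single, Eij_eq_single_add_single, add_comm]

theorem isSymm_Eij (i j : Fin m) : (Eij m i j).IsSymm := by
  rw [IsSymm, Eij_eq_single_add_single, transpose_add, transpose_single, transpose_single,
    add_comm]

theorem Eij_self (i : Fin m) : Eij m i i = (2 : ℝ) • single i i 1 := by
  rw [Eij_eq_single_add_single, two_smul]

theorem smul_Eij_sub_Eij_mul_diagonal (lam : Fin m → ℝ) (i j : Fin m) :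
    (3 * lam i + lam j) • Eij m i j -
        ((3 : ℝ) • (Eij m i j * diagonal lam) + diagonal lam * Eij m i j) =
      (2 * (lam i - lam j)) • single i j 1 := by
  simp only [Eij_eq_single_add_single, add_mul, mul_add, single_one_mul_diagonal,
    diagonal_mul_single_one]
  module

theorem symmetricMatrices_eq_span_Eij :
    symmetricMatrices (Fin m) ℝ = Submodule.span ℝ (Set.range (Function.uncurry (Eij m))) := by
  refine le_antisymm (fun S hS => ?_) (Submodule.span_le.2 ?_)
  · have hsum : S = ∑ p : Fin m × Fin m, (S p.1 p.2 / 2) • Eij m p.1 p.2 := by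
      ext k l
      have := hS.apply k l
      simp [Eij_eq_single_add_single, Matrix.sum_apply, single_apply, Finset.sum_add_distrib,
        Fintype.sum_prod_type, ite_and, this]
    rw [hsum]
    exact Submodule.sum_mem _ fun p _ => Submodule.smul_mem _ _ (Submodule.subset_span ⟨p, rfl⟩)
  · rintro _ ⟨⟨i, j⟩, rfl⟩
    exact isSymm_Eij i j

theorem map_symmetricMatrices_le {N : Type*} [AddCommMonoid N] [Module ℝ N]
    {L : Matrix (Fin m) (Fin m) ℝ →ₗ[ℝ] N} {W : Submodule ℝ N} (h : ∀ i j, L (Eij m i j) ∈ W) :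
    (symmetricMatrices (Fin m) ℝ).map L ≤ W := by
  rw [symmetricMatrices_eq_span_Eij, Submodule.map_span_le]
  rintro _ ⟨⟨i, j⟩, rfl⟩
  exact h i j

end Eij

section Generators

variable {m : ℕ} (lam : Fin m → ℝ)

def generators : Set (Matrix (Fin m ⊕ Fin m) (Fin m ⊕ Fin m) ℝ) :=
  {X | ∃ i j, i ≤ j ∧
    (X = fromBlocks₂₁ₗ (Eij m i j) ∨
      X = bracketCompanion (diagonal lam) (fromBlocks₂₁ₗ (Eij m i j)) ∨
      X = bracketCompanion (diagonal lam) (bracketCompanion (diagonal lam)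
        (fromBlocks₂₁ₗ (Eij m i j))) ∨
      X = bracketCompanion (diagonal lam) (bracketCompanion (diagonal lam)
        (bracketCompanion (diagonal lam) (fromBlocks₂₁ₗ (Eij m i j)))))}

theorem bracketCompanion_iterate_mem_span_generators (i j : Fin m) {k : ℕ} (hk : k ≤ 3) :
    (bracketCompanion (diagonal lam))^[k] (fromBlocks₂₁ₗ (Eij m i j)) ∈
      Submodule.span ℝ (generators lam) := by
  wlog hij : i ≤ j generalizing i j
  · rw [Eij_comm]; exact this j i (le_of_not_ge hij)
  refine Submodule.subset_span ⟨i, j, hij, ?_⟩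
  interval_cases k
  exacts [Or.inl rfl, Or.inr (Or.inl rfl), Or.inr (Or.inr (Or.inl rfl)),
    Or.inr (Or.inr (Or.inr rfl))]

theorem map_fromBlocks₂₁ₗ_le_span_generators :
    (symmetricMatrices (Fin m) ℝ).map fromBlocks₂₁ₗ ≤ Submodule.span ℝ (generators lam) :=
  map_symmetricMatrices_le fun i j =>
    bracketCompanion_iterate_mem_span_generators lam i j (k := 0) (by norm_num)

theorem fromBlocksSkewₗ_Eij_mem_span_generators (i j : Fin m) :
    fromBlocksSkewₗ (Eij m i j) ∈ Submodule.span ℝ (generators lam) := by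
  have h := bracketCompanion_iterate_mem_span_generators lam i j (k := 1) (by norm_num)
  rw [Function.iterate_one, bracketCompanion_fromBlocks₂₁ₗ (isSymm_Eij i j), map_neg] at h
  simpa using neg_mem h

theorem fromBlocksSkewₗ_Eij_mul_mem_span_generators (i j : Fin m) :
    fromBlocksSkewₗ ((3 : ℝ) • (Eij m i j * diagonal lam) + diagonal lam * Eij m i j) ∈
      Submodule.span ℝ (generators lam) := by
  have h := bracketCompanion_iterate_mem_span_generators lam i j (k := 3) (by norm_num)
  have hE : (-Eij m i j).IsSymm := (isSymm_Eij i j).neg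
  have hK : (diagonal lam).IsSymm := isSymm_diagonal lam
  rw [Function.iterate_succ_apply', Function.iterate_succ_apply', Function.iterate_one,
    bracketCompanion_fromBlocks₂₁ₗ (isSymm_Eij i j), bracketCompanion_fromBlocksSkewₗ hE, map_add,
    bracketCompanion_fromBlocks₁₂ₗ hK (hE.smul 2), bracketCompanion_fromBlocks₂₁ₗ
    (hE.mul_add_mul_self hK), ← map_add] at h
  convert h using 2
  simp only [neg_mul, mul_neg, smul_mul_assoc]
  module

theorem range_fromBlocksSkewₗ_le_span_generators (hlam : Pairwise fun i j => lam i ≠ lam j) :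
    LinearMap.range fromBlocksSkewₗ ≤ Submodule.span ℝ (generators lam) := by
  refine range_le_of_single_mem fun i j => ?_
  rcases eq_or_ne i j with rfl | hij
  · rw [← inv_smul_smul₀ (two_ne_zero' ℝ) (single i i 1), ← Eij_self, map_smul]
    exact Submodule.smul_mem _ _ (fromBlocksSkewₗ_Eij_mem_span_generators lam i i)
  · have hc : 2 * (lam i - lam j) ≠ 0 := mul_ne_zero two_ne_zero (sub_ne_zero.2 (hlam hij))
    rw [← inv_smul_smul₀ hc (single i j 1), ← smul_Eij_sub_Eij_mul_diagonal, map_smul, map_sub,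
      map_smul]
    exact Submodule.smul_mem _ _ (sub_mem
      (Submodule.smul_mem _ _ (fromBlocksSkewₗ_Eij_mem_span_generators lam i j))
      (fromBlocksSkewₗ_Eij_mul_mem_span_generators lam i j))

theorem map_fromBlocks₁₂ₗ_le_span_generators :
    (symmetricMatrices (Fin m) ℝ).map fromBlocks₁₂ₗ ≤ Submodule.span ℝ (generators lam) := by
  refine map_symmetricMatrices_le fun i j => ?_
  have hE : (-Eij m i j).IsSymm := (isSymm_Eij i j).neg
  have hlower := map_fromBlocks₂₁ₗ_le_span_generators lam
    (Submodule.mem_map_of_mem (hE.mul_add_mul_self (isSymm_diagonal lam)))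
  have h := bracketCompanion_iterate_mem_span_generators lam i j (k := 2) (by norm_num)
  rwa [Function.iterate_succ_apply', Function.iterate_one,
    bracketCompanion_fromBlocks₂₁ₗ (isSymm_Eij i j), bracketCompanion_fromBlocksSkewₗ hE,
    Submodule.add_mem_iff_left _ hlower, smul_neg, ← neg_smul, map_smul,
    Submodule.smul_mem_iff _ (by norm_num)] at h

theorem span_generators_eq_skewAdjoint_J (hlam : Pairwise fun i j => lam i ≠ lam j) :
    Submodule.span ℝ (generators lam) = skewAdjointMatricesSubmodule (J (Fin m) ℝ) := by
  refine le_antisymm (Submodule.span_le.2 ?_) ?_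
  · have hE (i j : Fin m) (k : ℕ) : (bracketCompanion (diagonal lam))^[k]
        (fromBlocks₂₁ₗ (Eij m i j)) ∈ skewAdjointMatricesSubmodule (J (Fin m) ℝ) := by
      induction k with
      | zero => exact fromBlocks_mem_skewAdjoint_J_iff.2 ⟨by simp, isSymm_zero, isSymm_Eij i j⟩
      | succ k ih =>
        rw [Function.iterate_succ_apply']
        exact bracketCompanion_mem_skewAdjoint_J (isSymm_diagonal lam) ih
    rintro _ ⟨i, j, -, rfl | rfl | rfl | rfl⟩
    exacts [hE i j 0, hE i j 1, hE i j 2, hE i j 3]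
  · exact skewAdjoint_J_le_sup.trans <| sup_le
      (sup_le (range_fromBlocksSkewₗ_le_span_generators lam hlam)
        (map_fromBlocks₁₂ₗ_le_span_generators lam))
      (map_fromBlocks₂₁ₗ_le_span_generators lam)

end Generators

theorem stmt_15_general (m : ℕ) (lam : Fin m → ℝ)
    (hlam : ∀ i j : Fin m, i ≠ j → lam i ≠ lam j) :
    let K : Matrix (Fin m) (Fin m) ℝ := Matrix.diagonal lam
    let A : Matrix (Fin m ⊕ Fin m) (Fin m ⊕ Fin m) ℝ := Matrix.fromBlocks 0 1 (-K) 0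
    let ℰ : Fin m → Fin m → Matrix (Fin m ⊕ Fin m) (Fin m ⊕ Fin m) ℝ :=
      fun i j => Matrix.fromBlocks 0 0 (Eij m i j) 0
    let B1 : Fin m → Fin m → Matrix (Fin m ⊕ Fin m) (Fin m ⊕ Fin m) ℝ :=
      fun i j => ℰ i j * A - A * ℰ i j
    let B2 : Fin m → Fin m → Matrix (Fin m ⊕ Fin m) (Fin m ⊕ Fin m) ℝ :=
      fun i j => B1 i j * A - A * B1 i j
    let B3 : Fin m → Fin m → Matrix (Fin m ⊕ Fin m) (Fin m ⊕ Fin m) ℝ :=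
      fun i j => B2 i j * A - A * B2 i j
    ∃ W : Submodule ℝ (Matrix (Fin m ⊕ Fin m) (Fin m ⊕ Fin m) ℝ),
      (W : Set (Matrix (Fin m ⊕ Fin m) (Fin m ⊕ Fin m) ℝ)) =
        {Y | (Jmat m * Y)ᵀ = Jmat m * Y} ∧
      Submodule.span ℝ
        {X | ∃ i j : Fin m, i ≤ j ∧
          (X = ℰ i j ∨ X = B1 i j ∨ X = B2 i j ∨ X = B3 i j)} = W ∧
      Module.finrank ℝ W = m * (2 * m + 1) := by
  intro K A ℰ B1 B2 B3
  refine ⟨skewAdjointMatricesSubmodule (J (Fin m) ℝ), ?_,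
    span_generators_eq_skewAdjoint_J lam hlam, ?_⟩
  · ext Y
    exact mem_skewAdjoint_J_iff_Jmat
  · rw [finrank_skewAdjoint_J, Fintype.card_fin, Nat.choose_two_right, Nat.add_sub_cancel,
      show (2 * m + 1) * (2 * m) = m * (2 * m + 1) * 2 by ring, Nat.mul_div_cancel _ two_pos]

/-- For `K = diag(λ)` with pairwise distinct eigenvalues and
`A = [[0, I],[-K, 0]]`, the matrices `ℰ(ij)`, `[ℰ(ij),A]`, `[[ℰ(ij),A],A]`,
`[[[ℰ(ij),A],A],A]`, over all `i ≤ j`, span the full Lie algebra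
sp(m) = {Y : J Y symmetric}, of dimension `m(2m+1)`. -/
theorem stmt_15 (m : ℕ) (hm : 1 ≤ m) (lam : Fin m → ℝ)
    (hlam : ∀ i j : Fin m, i ≠ j → lam i ≠ lam j) :
    let K : Matrix (Fin m) (Fin m) ℝ := Matrix.diagonal lam
    let A : Matrix (Fin m ⊕ Fin m) (Fin m ⊕ Fin m) ℝ := Matrix.fromBlocks 0 1 (-K) 0
    let ℰ : Fin m → Fin m → Matrix (Fin m ⊕ Fin m) (Fin m ⊕ Fin m) ℝ :=
      fun i j => Matrix.fromBlocks 0 0 (Eij m i j) 0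
    let B1 : Fin m → Fin m → Matrix (Fin m ⊕ Fin m) (Fin m ⊕ Fin m) ℝ :=
      fun i j => ℰ i j * A - A * ℰ i j
    let B2 : Fin m → Fin m → Matrix (Fin m ⊕ Fin m) (Fin m ⊕ Fin m) ℝ :=
      fun i j => B1 i j * A - A * B1 i j
    let B3 : Fin m → Fin m → Matrix (Fin m ⊕ Fin m) (Fin m ⊕ Fin m) ℝ :=
      fun i j => B2 i j * A - A * B2 i j
    ∃ W : Submodule ℝ (Matrix (Fin m ⊕ Fin m) (Fin m ⊕ Fin m) ℝ),
      (W : Set (Matrix (Fin m ⊕ Fin m) (Fin m ⊕ Fin m) ℝ)) =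
        {Y | (Jmat m * Y)ᵀ = Jmat m * Y} ∧
      Submodule.span ℝ
        {X | ∃ i j : Fin m, i ≤ j ∧
          (X = ℰ i j ∨ X = B1 i j ∨ X = B2 i j ∨ X = B3 i j)} = W ∧
      Module.finrank ℝ W = m * (2 * m + 1) :=
  stmt_15_general m lam hlam
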